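/- arXiv:2409.14625 — 3 statements merged into one kernel-verified Lean document; each statement's English description precedes it below -/
import Mathlib

section
/- Let E be a Banach lattice. The set of order extreme points of the closed unit ball of E* is an absolutely James boundary of E, i.e., for every x in E there exists an order extreme point f of the unit ball of E* with |f|(|x|) = ||x||. -/
open Filter Topology NormedSpace

/-- `dAbs f x` represents `|f|(x)` for a functional `f` on a Banach lattice,
via the Riesz–Kantorovich formula `|f|(x) = sup { f y : |y| ≤ x }` (for `x ≥ 0`). -/
noncomputable def dAbs {E : Type*} [NormedAddCommGroup E] [Lattice E] [HasSolidNorm E] [IsOrderedAddMonoid E] [NormedSpace ℝ E]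
    (f : E →L[ℝ] ℝ) (x : E) : ℝ :=
  sSup (f '' {y | |y| ≤ x})

/-- A bounded operator between Banach lattices is positive. -/
def IsPosOp {E F : Type*} [NormedAddCommGroup E] [Lattice E] [HasSolidNorm E] [IsOrderedAddMonoid E] [NormedSpace ℝ E]
    [NormedAddCommGroup F] [Lattice F] [HasSolidNorm F] [IsOrderedAddMonoid F] [NormedSpace ℝ F] (T : E →L[ℝ] F) : Prop :=
  ∀ x : E, 0 ≤ x → 0 ≤ T x

/-- The order `T ≤ S` between operators: `T x ≤ S x` for all positive `x`. -/
def OpLe {E F : Type*} [NormedAddCommGroup E] [Lattice E] [HasSolidNorm E] [IsOrderedAddMonoid E] [NormedSpace ℝ E]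
    [NormedAddCommGroup F] [Lattice F] [HasSolidNorm F] [IsOrderedAddMonoid F] [NormedSpace ℝ F] (T S : E →L[ℝ] F) : Prop :=
  ∀ x : E, 0 ≤ x → T x ≤ S x

/-- `m` is the modulus `|T|` of a regular operator `T`: the least upper bound
of `T` and `-T` in the operator order. -/
def IsModulus {E F : Type*} [NormedAddCommGroup E] [Lattice E] [HasSolidNorm E] [IsOrderedAddMonoid E] [NormedSpace ℝ E]
    [NormedAddCommGroup F] [Lattice F] [HasSolidNorm F] [IsOrderedAddMonoid F] [NormedSpace ℝ F] (T m : E →L[ℝ] F) : Prop :=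
  OpLe T m ∧ OpLe (-T) m ∧ ∀ S : E →L[ℝ] F, OpLe T S → OpLe (-T) S → OpLe m S

/-- The order `f ≤ g` in the dual lattice: `f x ≤ g x` for all positive `x`. -/
def DualLe {E : Type*} [NormedAddCommGroup E] [Lattice E] [HasSolidNorm E] [IsOrderedAddMonoid E] [NormedSpace ℝ E]
    (f g : E →L[ℝ] ℝ) : Prop :=
  ∀ x : E, 0 ≤ x → f x ≤ g x

/-!
Put `u = |x|`. The positive functionals `f` with `‖f‖ ≤ 1` and `f u = ‖u‖` form a nonempty
weak-* compact set `K` (take `|φ|` for a Hahn–Banach norming functional `φ`). Zorn's lemma applied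
to the closed extreme subsets of `K` that are upward closed for the dual order yields an `f ∈ K`
that is both an extreme point of `K` and maximal in `K`. Such an `f` is an order extreme point of
the dual ball: if `f ≤ t g₀ + (1 - t) g₁`, then `t g₀⁺ + (1 - t) g₁⁺` lies in `K` above `f`, so it
equals `f`; extremality gives `gᵢ⁺ = f`, and maximality applied to `|gᵢ| ≥ gᵢ⁺` forces
`(-gᵢ)⁺ = 0`, i.e. `gᵢ = gᵢ⁺`. Finally `|f|(|x|) = f |x| = ‖x‖` as `f` is positive.
-/

lemma norm_le_norm_of_nonneg_of_le {E : Type*} [NormedAddCommGroup E] [Lattice E] [HasSolidNorm E]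
    [IsOrderedAddMonoid E] {a b : E} (ha : 0 ≤ a) (hab : a ≤ b) : ‖a‖ ≤ ‖b‖ :=
  norm_le_norm_of_abs_le_abs <| by rwa [abs_of_nonneg ha, abs_of_nonneg (ha.trans hab)]

lemma inv_two_pow_smul_nonneg {E : Type*} [AddCommGroup E] [Lattice E] [IsOrderedAddMonoid E]
    [Module ℝ E] {w : E} (hw : 0 ≤ w) (k : ℕ) : 0 ≤ ((2 : ℝ) ^ k)⁻¹ • w := by
  induction k with
  | zero => simpa using hw
  | succ k ih =>
    refine nsmul_two_semiclosed ?_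
    have h2 : (2 : ℝ) * ((2 : ℝ) ^ (k + 1))⁻¹ = ((2 : ℝ) ^ k)⁻¹ := by
      rw [pow_succ]; field_simp
    rwa [← Nat.cast_smul_eq_nsmul ℝ, smul_smul, Nat.cast_ofNat, h2]

/-- Dyadic multiples of a positive vector are positive, and the positive cone is closed. -/
instance HasSolidNorm.posSMulMono {E : Type*} [NormedAddCommGroup E] [Lattice E] [HasSolidNorm E]
    [IsOrderedAddMonoid E] [NormedSpace ℝ E] : PosSMulMono ℝ E := by
  have key : ∀ {c : ℝ}, 0 ≤ c → ∀ {w : E}, 0 ≤ w → 0 ≤ c • w := by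
    intro c hc w hw
    have hlim : Tendsto (fun k : ℕ ↦ ((⌊c * 2 ^ k⌋₊ : ℝ) / 2 ^ k) • w) atTop (𝓝 (c • w)) :=
      ((tendsto_nat_floor_mul_div_atTop hc).comp
        (tendsto_pow_atTop_atTop_of_one_lt one_lt_two)).smul_const w
    refine isClosed_nonneg.mem_of_tendsto hlim (Eventually.of_forall fun k ↦ ?_)
    rw [Set.mem_ofPred_eq, div_eq_mul_inv, mul_smul, Nat.cast_smul_eq_nsmul]
    exact nsmul_nonneg (inv_two_pow_smul_nonneg hw k) _
  refine ⟨fun c hc a b hab ↦ ?_⟩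
  simpa [smul_sub] using key hc (sub_nonneg.2 hab)

lemma sub_eq_sub_of_additive_on_nonneg {E : Type*} [AddCommGroup E] [PartialOrder E] (φ : E → ℝ)
    (hadd : ∀ ⦃u v : E⦄, 0 ≤ u → 0 ≤ v → φ (u + v) = φ u + φ v) {a b c d : E} (ha : 0 ≤ a)
    (hb : 0 ≤ b) (hc : 0 ≤ c) (hd : 0 ≤ d) (h : a - b = c - d) : φ a - φ b = φ c - φ d := by
  have := congrArg φ (sub_eq_sub_iff_add_eq_add.mp h)
  rw [hadd ha hd, hadd hc hb] at this
  linarith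

lemma posPart_smul_of_nonneg {E : Type*} [AddCommGroup E] [Lattice E] [Module ℝ E]
    [PosSMulMono ℝ E] {c : ℝ} (hc : 0 ≤ c) (v : E) : (c • v)⁺ = c • v⁺ := by
  rcases hc.eq_or_lt with rfl | hc
  · simp
  · have h := (OrderIso.smulRight hc).map_sup v 0
    simp only [OrderIso.smulRight_apply, smul_zero] at h
    rw [posPart_def, posPart_def, ← h]

lemma negPart_smul_of_nonneg {E : Type*} [AddCommGroup E] [Lattice E] [Module ℝ E]
    [PosSMulMono ℝ E] {c : ℝ} (hc : 0 ≤ c) (v : E) : (c • v)⁻ = c • v⁻ := by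
  rw [← posPart_neg, ← smul_neg, posPart_smul_of_nonneg hc, posPart_neg]

section LatticeModule

variable {E : Type*} [AddCommGroup E] [Lattice E] [IsOrderedAddMonoid E] [Module ℝ E]
  [PosSMulMono ℝ E]

noncomputable def linearMapOfNonneg (φ : E → ℝ)
    (hadd : ∀ ⦃u v : E⦄, 0 ≤ u → 0 ≤ v → φ (u + v) = φ u + φ v)
    (hsmul : ∀ ⦃c : ℝ⦄ ⦃v : E⦄, 0 ≤ c → 0 ≤ v → φ (c • v) = c * φ v) : E →ₗ[ℝ] ℝ where
  toFun v := φ v⁺ - φ v⁻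
  map_add' a b := by
    rw [sub_eq_sub_of_additive_on_nonneg φ hadd (posPart_nonneg _) (negPart_nonneg _)
      (add_nonneg (posPart_nonneg a) (posPart_nonneg b))
      (add_nonneg (negPart_nonneg a) (negPart_nonneg b))
      (by rw [posPart_sub_negPart, add_sub_add_comm, posPart_sub_negPart, posPart_sub_negPart]),
      hadd (posPart_nonneg a) (posPart_nonneg b), hadd (negPart_nonneg a) (negPart_nonneg b)]
    ring
  map_smul' c v := by
    rcases le_total 0 c with hc | hc
    · rw [posPart_smul_of_nonneg hc, negPart_smul_of_nonneg hc, hsmul hc (posPart_nonneg v),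
        hsmul hc (negPart_nonneg v), RingHom.id_apply, smul_eq_mul]
      ring
    · rw [show c • v = (-c) • -v by simp, posPart_smul_of_nonneg (neg_nonneg.2 hc),
        negPart_smul_of_nonneg (neg_nonneg.2 hc), posPart_neg, negPart_neg,
        hsmul (neg_nonneg.2 hc) (negPart_nonneg v), hsmul (neg_nonneg.2 hc) (posPart_nonneg v),
        RingHom.id_apply, smul_eq_mul]
      ring

lemma linearMapOfNonneg_apply_of_nonneg (φ : E → ℝ)
    (hadd : ∀ ⦃u v : E⦄, 0 ≤ u → 0 ≤ v → φ (u + v) = φ u + φ v)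
    (hsmul : ∀ ⦃c : ℝ⦄ ⦃v : E⦄, 0 ≤ c → 0 ≤ v → φ (c • v) = c * φ v) {v : E} (hv : 0 ≤ v) :
    linearMapOfNonneg φ hadd hsmul v = φ v := by
  have hφ0 : φ 0 = 0 := by simpa using hsmul le_rfl le_rfl (v := (0 : E))
  simp [linearMapOfNonneg, posPart_eq_self.2 hv, negPart_eq_zero.2 hv, hφ0]

end LatticeModule

lemma ext_nonneg {E F : Type*} [AddCommGroup E] [Lattice E] [IsOrderedAddMonoid E] [FunLike F E ℝ]
    [AddMonoidHomClass F E ℝ] {f g : F} (h : ∀ v, 0 ≤ v → f v = g v) : f = g :=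
  DFunLike.ext f g fun v ↦ by
    rw [← posPart_sub_negPart v, map_sub, map_sub, h _ (posPart_nonneg v), h _ (negPart_nonneg v)]

lemma norm_apply_le_of_nonneg {E F : Type*} [NormedAddCommGroup E] [Lattice E] [HasSolidNorm E]
    [IsOrderedAddMonoid E] [FunLike F E ℝ] [AddMonoidHomClass F E ℝ] (p : F)
    (hp : ∀ v, 0 ≤ v → 0 ≤ p v) {C : ℝ} (hC : ∀ v, 0 ≤ v → p v ≤ C * ‖v‖) (v : E) :
    ‖p v‖ ≤ C * ‖v‖ := by
  have hv : p v = p v⁺ - p v⁻ := by rw [← map_sub, posPart_sub_negPart]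
  have habs : p |v| = p v⁺ + p v⁻ := by rw [← map_add, posPart_add_negPart]
  have hpos := hp _ (posPart_nonneg v)
  have hneg := hp _ (negPart_nonneg v)
  calc ‖p v‖ ≤ p |v| := by rw [Real.norm_eq_abs, abs_le, hv, habs]; constructor <;> linarith
    _ ≤ C * ‖v‖ := by simpa only [norm_abs_eq_norm] using hC _ (abs_nonneg v)

section DualPosPart

variable {E : Type*} [NormedAddCommGroup E] [Lattice E] [NormedSpace ℝ E]

/-- On a positive `v`, this is the Riesz–Kantorovich formula for `g⁺ v`. -/
noncomputable def supIcc (g : E →L[ℝ] ℝ) (v : E) : ℝ :=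
  sSup (g '' Set.Icc 0 v)

variable (g : E →L[ℝ] ℝ)

lemma supIcc_le {v : E} (hv : 0 ≤ v) {r : ℝ} (h : ∀ y ∈ Set.Icc 0 v, g y ≤ r) :
    supIcc g v ≤ r :=
  csSup_le ⟨g 0, 0, ⟨le_rfl, hv⟩, rfl⟩ (Set.forall_mem_image.2 h)

variable [HasSolidNorm E] [IsOrderedAddMonoid E]
lemma apply_le_of_mem_Icc {v y : E} (hy : y ∈ Set.Icc 0 v) : g y ≤ ‖g‖ * ‖v‖ :=
  (le_abs_self _).trans <| (g.le_opNorm y).trans <|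
    mul_le_mul_of_nonneg_left (norm_le_norm_of_nonneg_of_le hy.1 hy.2) (norm_nonneg g)

lemma le_supIcc {v y : E} (hy : y ∈ Set.Icc 0 v) : g y ≤ supIcc g v :=
  le_csSup ⟨_, Set.forall_mem_image.2 fun _ ↦ apply_le_of_mem_Icc g⟩ ⟨y, hy, rfl⟩

lemma supIcc_nonneg {v : E} (hv : 0 ≤ v) : 0 ≤ supIcc g v := by
  simpa using le_supIcc g ⟨le_rfl, hv⟩

lemma apply_le_supIcc {v : E} (hv : 0 ≤ v) : g v ≤ supIcc g v :=
  le_supIcc g ⟨hv, le_rfl⟩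

/-- The Riesz decomposition property: `[0, u + v] = [0, u] + [0, v]` for positive `u`, `v`. -/
lemma supIcc_add {u v : E} (hu : 0 ≤ u) (hv : 0 ≤ v) :
    supIcc g (u + v) = supIcc g u + supIcc g v := by
  refine le_antisymm (supIcc_le g (add_nonneg hu hv) fun y hy ↦ ?_) ?_
  · have hrest : y - y ⊓ u ∈ Set.Icc 0 v := by
      refine ⟨sub_nonneg.2 inf_le_left, ?_⟩
      rw [sub_inf, sub_self]
      exact sup_le hv (sub_le_iff_le_add'.2 hy.2)
    calc g y = g (y ⊓ u) + g (y - y ⊓ u) := by rw [← map_add, add_sub_cancel]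
      _ ≤ supIcc g u + supIcc g v :=
        add_le_add (le_supIcc g ⟨le_inf hy.1 hu, inf_le_right⟩) (le_supIcc g hrest)
  · rw [← le_sub_iff_add_le]
    refine supIcc_le g hu fun y hy ↦ ?_
    rw [le_sub_comm]
    refine supIcc_le g hv fun z hz ↦ ?_
    rw [le_sub_iff_add_le, ← map_add]
    exact le_supIcc g ⟨add_nonneg hz.1 hy.1, add_comm u v ▸ add_le_add hz.2 hy.2⟩

lemma supIcc_smul {c : ℝ} (hc : 0 ≤ c) {v : E} (hv : 0 ≤ v) :
    supIcc g (c • v) = c * supIcc g v := by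
  rcases hc.eq_or_lt with rfl | hc
  · simpa using le_antisymm (supIcc_le g le_rfl fun y hy ↦ by simp [le_antisymm hy.2 hy.1])
      (supIcc_nonneg g le_rfl)
  refine le_antisymm (supIcc_le g (smul_nonneg hc.le hv) fun y hy ↦ ?_) ?_
  · have hy' : c⁻¹ • y ∈ Set.Icc 0 v :=
      ⟨smul_nonneg (inv_nonneg.2 hc.le) hy.1, (inv_smul_le_iff_of_pos hc).2 hy.2⟩
    calc g y = c * g (c⁻¹ • y) := by rw [map_smul, smul_eq_mul, mul_inv_cancel_left₀ hc.ne']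
      _ ≤ c * supIcc g v := mul_le_mul_of_nonneg_left (le_supIcc g hy') hc.le
  · rw [← le_inv_mul_iff₀ hc]
    refine supIcc_le g hv fun y hy ↦ ?_
    rw [le_inv_mul_iff₀ hc, ← smul_eq_mul, ← map_smul]
    exact le_supIcc g ⟨smul_nonneg hc.le hy.1, smul_le_smul_of_nonneg_left hy.2 hc.le⟩

lemma supIcc_add_supIcc_neg_le {v : E} (hv : 0 ≤ v) :
    supIcc g v + supIcc (-g) v ≤ ‖g‖ * ‖v‖ := by
  rw [← le_sub_iff_add_le']
  refine supIcc_le (-g) hv fun z hz ↦ ?_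
  rw [le_sub_comm]
  refine supIcc_le g hv fun y hy ↦ ?_
  rw [le_sub_iff_add_le]
  have habs : |y - z| ≤ |v| := by
    rw [abs_of_nonneg hv, abs_le', neg_sub]
    exact ⟨(sub_le_self y hz.1).trans hy.2, (sub_le_self z hy.1).trans hz.2⟩
  calc g y + (-g) z = g (y - z) := by simp [sub_eq_add_neg]
    _ ≤ ‖g‖ * ‖v‖ := (le_abs_self _).trans <| (g.le_opNorm _).trans <|
      mul_le_mul_of_nonneg_left (norm_le_norm_of_abs_le_abs habs) (norm_nonneg g)

lemma supIcc_eq_add_supIcc_neg {v : E} (hv : 0 ≤ v) : supIcc g v = g v + supIcc (-g) v := by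
  refine le_antisymm (supIcc_le g hv fun y hy ↦ ?_) ?_
  · calc g y = g v + (-g) (v - y) := by simp
      _ ≤ g v + supIcc (-g) v :=
        add_le_add_right (le_supIcc (-g) ⟨sub_nonneg.2 hy.2, sub_le_self v hy.1⟩) _
  · rw [← le_sub_iff_add_le']
    refine supIcc_le (-g) hv fun z hz ↦ ?_
    rw [le_sub_iff_add_le']
    calc g v + (-g) z = g (v - z) := by simp [sub_eq_add_neg]
      _ ≤ supIcc g v := le_supIcc g ⟨sub_nonneg.2 hz.2, sub_le_self v hz.1⟩

noncomputable def dualPosPart : E →L[ℝ] ℝ :=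
  (linearMapOfNonneg (supIcc g) (fun _ _ ↦ supIcc_add g)
    fun _ _ hc hv ↦ supIcc_smul g hc hv).mkContinuous
    ‖g‖ <| norm_apply_le_of_nonneg _
      (fun v hv ↦ by simpa [linearMapOfNonneg_apply_of_nonneg _ _ _ hv] using supIcc_nonneg g hv)
      fun v hv ↦ by
        rw [linearMapOfNonneg_apply_of_nonneg _ _ _ hv]
        linarith [supIcc_add_supIcc_neg_le g hv, supIcc_nonneg (-g) hv]

lemma dualPosPart_apply_of_nonneg {v : E} (hv : 0 ≤ v) : dualPosPart g v = supIcc g v :=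
  linearMapOfNonneg_apply_of_nonneg (supIcc g) (fun _ _ ↦ supIcc_add g)
    (fun _ _ hc hv ↦ supIcc_smul g hc hv) hv

lemma norm_dualPosPart_le : ‖dualPosPart g‖ ≤ ‖g‖ :=
  LinearMap.mkContinuous_norm_le _ (norm_nonneg g) _


lemma isPosOp_dualPosPart : IsPosOp (dualPosPart g) := fun v hv ↦ by
  rw [dualPosPart_apply_of_nonneg g hv]
  exact supIcc_nonneg g hv

lemma dualLe_dualPosPart : DualLe g (dualPosPart g) := fun v hv ↦ by
  rw [dualPosPart_apply_of_nonneg g hv]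
  exact apply_le_supIcc g hv

lemma dualPosPart_eq_add_dualPosPart_neg : dualPosPart g = g + dualPosPart (-g) :=
  ext_nonneg fun v hv ↦ by
    rw [add_apply, dualPosPart_apply_of_nonneg g hv,
      dualPosPart_apply_of_nonneg (-g) hv, supIcc_eq_add_supIcc_neg g hv]

noncomputable def dualAbs : E →L[ℝ] ℝ :=
  dualPosPart g + dualPosPart (-g)

lemma isPosOp_dualAbs : IsPosOp (dualAbs g) := fun v hv ↦
  add_nonneg (isPosOp_dualPosPart g v hv) (isPosOp_dualPosPart (-g) v hv)

lemma norm_dualAbs_le : ‖dualAbs g‖ ≤ ‖g‖ :=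
  ContinuousLinearMap.opNorm_le_bound _ (norm_nonneg g) <|
    norm_apply_le_of_nonneg _ (isPosOp_dualAbs g) fun v hv ↦ by
      rw [dualAbs, add_apply, dualPosPart_apply_of_nonneg g hv,
        dualPosPart_apply_of_nonneg (-g) hv]
      exact supIcc_add_supIcc_neg_le g hv

end DualPosPart

section UpperFace

variable {X ι : Type*} [AddCommGroup X] [Module ℝ X] [TopologicalSpace X]

def IsUpperFace (ℓ : ι → StrongDual ℝ X) (K C : Set X) : Prop :=
  C.Nonempty ∧ IsClosed C ∧ IsExtreme ℝ K C ∧ ∀ x ∈ C, ∀ y ∈ K, (∀ i, ℓ i x ≤ ℓ i y) → y ∈ C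

variable {ℓ : ι → StrongDual ℝ X} {K : Set X}

lemma isUpperFace_self (hne : K.Nonempty) (hK : IsClosed K) : IsUpperFace ℓ K K :=
  ⟨hne, hK, IsExtreme.rfl, fun _ _ _ hy _ ↦ hy⟩

lemma IsUpperFace.sInter (hK : IsCompact K) {F : Set (Set X)} (hF : ∀ C ∈ F, IsUpperFace ℓ K C)
    (hchain : IsChain (· ⊆ ·) F) (hne : F.Nonempty) : IsUpperFace ℓ K (⋂₀ F) := by
  refine ⟨?_, isClosed_sInter fun C hC ↦ (hF C hC).2.1,
    isExtreme_sInter hne fun C hC ↦ (hF C hC).2.2.1,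
    fun x hx y hy hxy C hC ↦ (hF C hC).2.2.2 x (hx C hC) y hy hxy⟩
  have : Nonempty F := hne.to_subtype
  rw [Set.sInter_eq_iInter]
  refine IsCompact.nonempty_iInter_of_directed_nonempty_isCompact_isClosed _ (fun C D ↦ ?_)
    (fun C ↦ (hF C C.2).1) (fun C ↦ hK.of_isClosed_subset (hF C C.2).2.1 (hF C C.2).2.2.1.1)
    fun C ↦ (hF C C.2).2.1
  obtain hCD | hDC := hchain.total C.2 D.2
  exacts [⟨C, subset_rfl, hCD⟩, ⟨D, hDC, subset_rfl⟩]

lemma IsUpperFace.toExposed (hK : IsCompact K) {C : Set X} (hC : IsUpperFace ℓ K C) (i : ι) :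
    IsUpperFace ℓ K ((ℓ i).toExposed C) := by
  obtain ⟨hne, hclosed, hext, hup⟩ := hC
  obtain ⟨z, hz, hmax⟩ := (hK.of_isClosed_subset hclosed hext.1).exists_isMaxOn hne
    (ℓ i).continuous.continuousOn
  have hexp := ContinuousLinearMap.toExposed.isExposed (l := ℓ i) (A := C)
  refine ⟨⟨z, hz, fun w hw ↦ hmax hw⟩, hexp.isClosed hclosed, hext.trans hexp.isExtreme,
    fun x hx y hy hxy ↦ ⟨hup x hx.1 y hy hxy, fun w hw ↦ (hx.2 w hw).trans (hxy i)⟩⟩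

/-- A Krein–Milman lemma for a cone order: a minimal closed extreme subset of `K` that is upward
closed must be a singleton, since each `ℓ i` is constant on it. -/
theorem IsCompact.exists_mem_extremePoints_maximal (hK : IsCompact K) (hKc : IsClosed K)
    (hne : K.Nonempty) (hsep : ∀ x ∈ K, ∀ y ∈ K, (∀ i, ℓ i x = ℓ i y) → x = y) :
    ∃ x ∈ K.extremePoints ℝ, ∀ y ∈ K, (∀ i, ℓ i x ≤ ℓ i y) → y = x := by
  obtain ⟨C, -, hmin⟩ := zorn_superset_nonempty {C | IsUpperFace ℓ K C}
    (fun F hF hchain hne ↦ ⟨_, IsUpperFace.sInter hK hF hchain hne,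
      fun _ ↦ Set.sInter_subset_of_mem⟩) K (isUpperFace_self hne hKc)
  obtain ⟨⟨x, hx⟩, -, hext, hup⟩ := hmin.prop
  have hconst : ∀ y ∈ C, ∀ i, ℓ i y = ℓ i x := fun y hy i ↦ by
    have hCi := hmin.le_of_le (hmin.prop.toExposed hK i) (Set.sep_subset _ _)
    exact le_antisymm ((hCi hx).2 y hy) ((hCi hy).2 x hx)
  have hCx : C = {x} := Set.eq_singleton_iff_unique_mem.2
    ⟨hx, fun y hy ↦ hsep y (hext.1 hy) x (hext.1 hx) (hconst y hy)⟩
  subst hCx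
  exact ⟨x, isExtreme_singleton.1 hext, fun y hy hxy ↦ hup x rfl y hy hxy⟩

end UpperFace

lemma apply_le_norm_of_norm_le_one {E : Type*} [SeminormedAddCommGroup E] [NormedSpace ℝ E]
    {f : E →L[ℝ] ℝ} (hf : ‖f‖ ≤ 1) (v : E) : f v ≤ ‖v‖ :=
  (le_abs_self _).trans <| by simpa using f.le_of_opNorm_le hf v

section NormingFunctionals

variable {E : Type*} [NormedAddCommGroup E] [Lattice E] [HasSolidNorm E] [IsOrderedAddMonoid E]
  [NormedSpace ℝ E]

lemma dAbs_eq_apply_of_isPosOp {f : E →L[ℝ] ℝ} (hf : IsPosOp f) {v : E} (hv : 0 ≤ v) :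
    dAbs f v = f v := by
  refine IsGreatest.csSup_eq ⟨⟨v, (abs_of_nonneg hv).le, rfl⟩, ?_⟩
  rintro _ ⟨y, hy, rfl⟩
  have hy_abs := hf _ (sub_nonneg.2 (le_abs_self y))
  have habs_v := hf _ (sub_nonneg.2 hy)
  rw [map_sub, sub_nonneg] at hy_abs habs_v
  exact hy_abs.trans habs_v

def posNormingSet (u : E) : Set (E →L[ℝ] ℝ) :=
  {f | ‖f‖ ≤ 1 ∧ IsPosOp f ∧ f u = ‖u‖}

variable {u : E}

lemma posNormingSet_nonempty (hu : 0 ≤ u) : (posNormingSet u).Nonempty := by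
  obtain ⟨φ, hφ, hφu⟩ := exists_dual_vector'' ℝ u
  have hnorm : ‖dualAbs φ‖ ≤ 1 := (norm_dualAbs_le φ).trans hφ
  refine ⟨dualAbs φ, hnorm, isPosOp_dualAbs φ,
    le_antisymm (apply_le_norm_of_norm_le_one hnorm u) ?_⟩
  calc ‖u‖ = φ u := hφu.symm
    _ ≤ dualPosPart φ u + dualPosPart (-φ) u :=
      le_add_of_le_of_nonneg (dualLe_dualPosPart φ u hu) (isPosOp_dualPosPart (-φ) u hu)

lemma mem_posNormingSet_of_dualLe (hu : 0 ≤ u) {f h : E →L[ℝ] ℝ} (hf : f ∈ posNormingSet u)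
    (hh : ‖h‖ ≤ 1) (hfh : DualLe f h) : h ∈ posNormingSet u :=
  ⟨hh, fun v hv ↦ (hf.2.1 v hv).trans (hfh v hv),
    le_antisymm (apply_le_norm_of_norm_le_one hh u) (hf.2.2 ▸ hfh u hu)⟩

open WeakDual in
lemma isClosed_preimage_posNormingSet (u : E) :
    IsClosed (toStrongDual ⁻¹' posNormingSet u : Set (WeakDual ℝ E)) := by
  have hset : toStrongDual ⁻¹' posNormingSet u = toStrongDual ⁻¹' Metric.closedBall 0 1 ∩
      ((⋂ (v : E) (_ : 0 ≤ v), {f : WeakDual ℝ E | 0 ≤ f v}) ∩ {f | f u = ‖u‖}) := by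
    ext f
    simp [posNormingSet, IsPosOp]
  rw [hset]
  refine (isClosed_closedBall 0 1).inter (IsClosed.inter ?_ ?_)
  · exact isClosed_biInter fun v _ ↦ isClosed_le continuous_const (eval_continuous v)
  · exact isClosed_eq (eval_continuous u) continuous_const

/-- The evaluations at positive vectors separate the dual, so the order Krein–Milman lemma
applies to the weak-* compact set `posNormingSet u`. -/
lemma exists_mem_extremePoints_posNormingSet_maximal (hu : 0 ≤ u) :
    ∃ f ∈ (posNormingSet u).extremePoints ℝ, ∀ h ∈ posNormingSet u, DualLe f h → h = f := by
  have hKc := isClosed_preimage_posNormingSet u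
  have hK : IsCompact (WeakDual.toStrongDual ⁻¹' posNormingSet u) :=
    (WeakDual.isCompact_closedBall (0 : E →L[ℝ] ℝ) 1).of_isClosed_subset hKc fun f hf ↦
      mem_closedBall_zero_iff.2 hf.1
  obtain ⟨f, hf⟩ := posNormingSet_nonempty hu
  obtain ⟨x, hx, hmax⟩ := hK.exists_mem_extremePoints_maximal
    (ℓ := fun v : {v : E // 0 ≤ v} ↦ WeakBilin.eval (topDualPairing ℝ E) v) hKc
    ⟨StrongDual.toWeakDual f, hf⟩ fun x _ y _ hxy ↦ ext_nonneg fun v hv ↦ hxy ⟨v, hv⟩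
  refine ⟨WeakDual.toStrongDual x, ?_, fun h hh hfh ↦ ?_⟩
  · rw [← Set.image_preimage_eq (posNormingSet u) WeakDual.toStrongDual.surjective,
      ← image_extremePoints]
    exact ⟨x, hx, rfl⟩
  · exact congrArg WeakDual.toStrongDual (hmax (StrongDual.toWeakDual h) hh fun v ↦ hfh v v.2)

variable {f : E →L[ℝ] ℝ}

lemma eq_of_dualPosPart_eq (hu : 0 ≤ u) (hf : f ∈ posNormingSet u)
    (hmax : ∀ h ∈ posNormingSet u, DualLe f h → h = f) {g : E →L[ℝ] ℝ} (hg : ‖g‖ ≤ 1)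
    (hgf : dualPosPart g = f) : g = f := by
  have hle : DualLe f (dualAbs g) := fun v hv ↦ by
    rw [← hgf, dualAbs, add_apply]
    exact le_add_of_nonneg_right (isPosOp_dualPosPart (-g) v hv)
  have habs : dualAbs g = f :=
    hmax _ (mem_posNormingSet_of_dualLe hu hf ((norm_dualAbs_le g).trans hg) hle) hle
  have hneg : dualPosPart (-g) = 0 := by
    rw [dualAbs, hgf] at habs
    exact add_eq_left.1 habs
  rw [← hgf, dualPosPart_eq_add_dualPosPart_neg g, hneg, add_zero]

lemma orderExtreme_of_mem_extremePoints_maximal (hu : 0 ≤ u)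
    (hext : f ∈ (posNormingSet u).extremePoints ℝ)
    (hmax : ∀ h ∈ posNormingSet u, DualLe f h → h = f) (g₀ g₁ : E →L[ℝ] ℝ) (hg₀ : ‖g₀‖ ≤ 1)
    (hg₁ : ‖g₁‖ ≤ 1) (t : ℝ) (ht₀ : 0 < t) (ht₁ : t < 1)
    (hle : DualLe f (t • g₀ + (1 - t) • g₁)) : g₀ = f ∧ g₁ = f := by
  set p₀ := dualPosPart g₀
  set p₁ := dualPosPart g₁
  have hp₀ : ‖p₀‖ ≤ 1 := (norm_dualPosPart_le g₀).trans hg₀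
  have hp₁ : ‖p₁‖ ≤ 1 := (norm_dualPosPart_le g₁).trans hg₁
  have hball : ‖t • p₀ + (1 - t) • p₁‖ ≤ 1 := by
    simpa using convex_closedBall (0 : E →L[ℝ] ℝ) 1 (by simpa using hp₀) (by simpa using hp₁)
      ht₀.le (by linarith) (by ring)
  have hle' : DualLe f (t • p₀ + (1 - t) • p₁) := fun v hv ↦ (hle v hv).trans <| by
    simp only [add_apply, smul_apply, smul_eq_mul]
    exact add_le_add (mul_le_mul_of_nonneg_left (dualLe_dualPosPart g₀ v hv) ht₀.le)
      (mul_le_mul_of_nonneg_left (dualLe_dualPosPart g₁ v hv) (by linarith))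
  have hcomb : t • p₀ + (1 - t) • p₁ = f :=
    hmax _ (mem_posNormingSet_of_dualLe hu hext.1 hball hle') hle'
  have hcomb_u := congrArg (· u) hcomb
  simp only [add_apply, smul_apply, smul_eq_mul, hext.1.2.2] at hcomb_u
  have hp₀u := apply_le_norm_of_norm_le_one hp₀ u
  have hp₁u := apply_le_norm_of_norm_le_one hp₁ u
  obtain ⟨h₀, h₁⟩ := (mem_extremePoints.1 hext).2 p₀
    ⟨hp₀, isPosOp_dualPosPart g₀, by nlinarith⟩ p₁ ⟨hp₁, isPosOp_dualPosPart g₁, by nlinarith⟩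
    ⟨t, 1 - t, ht₀, by linarith, by ring, hcomb⟩
  exact ⟨eq_of_dualPosPart_eq hu hext.1 hmax hg₀ h₀, eq_of_dualPosPart_eq hu hext.1 hmax hg₁ h₁⟩

end NormingFunctionals

theorem orderExtremePoints_absolutelyJamesBoundary_general {E : Type*}
    [NormedAddCommGroup E] [Lattice E] [HasSolidNorm E] [IsOrderedAddMonoid E] [NormedSpace ℝ E] (x : E) :
    ∃ f : E →L[ℝ] ℝ, ‖f‖ ≤ 1 ∧
      (∀ g₀ g₁ : E →L[ℝ] ℝ, ‖g₀‖ ≤ 1 → ‖g₁‖ ≤ 1 → ∀ t : ℝ, 0 < t → t < 1 →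
        DualLe f (t • g₀ + (1 - t) • g₁) → g₀ = f ∧ g₁ = f) ∧
      dAbs f |x| = ‖x‖ := by
  obtain ⟨f, hext, hmax⟩ := exists_mem_extremePoints_posNormingSet_maximal (abs_nonneg x)
  refine ⟨f, hext.1.1, orderExtreme_of_mem_extremePoints_maximal (abs_nonneg x) hext hmax, ?_⟩
  rw [dAbs_eq_apply_of_isPosOp hext.1.2.1 (abs_nonneg x), hext.1.2.2, norm_abs_eq_norm]

/-- The order extreme points of the dual unit ball form an absolutely James boundary:
for every `x` there is an order extreme point `f` of `B_{E*}` with `|f|(|x|) = ‖x‖`. -/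
theorem orderExtremePoints_absolutelyJamesBoundary {E : Type*}
    [NormedAddCommGroup E] [Lattice E] [HasSolidNorm E] [IsOrderedAddMonoid E] [NormedSpace ℝ E] [CompleteSpace E] (x : E) :
    ∃ f : E →L[ℝ] ℝ, ‖f‖ ≤ 1 ∧
      (∀ g₀ g₁ : E →L[ℝ] ℝ, ‖g₀‖ ≤ 1 → ‖g₁‖ ≤ 1 → ∀ t : ℝ, 0 < t → t < 1 →
        DualLe f (t • g₀ + (1 - t) • g₁) → g₀ = f ∧ g₁ = f) ∧
      dAbs f |x| = ‖x‖ :=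
  orderExtremePoints_absolutelyJamesBoundary_general x
end

section
/- Let G be a Banach lattice with order continuous norm whose order is defined by a basis. Then there exists a sequence (S_n) of positive compact operators on G with regular norm at most 1 such that || |S_n − id_G|(x) || → 0 for every x in G. -/
open Filter Topology NormedSpace

/-- The norm of `G` is order continuous: every downward-directed set with infimum `0`
contains elements of arbitrarily small norm. -/
def OrderContNorm (G : Type*) [NormedAddCommGroup G] [Lattice G] [HasSolidNorm G] [IsOrderedAddMonoid G] : Prop :=
  ∀ A : Set G, A.Nonempty → DirectedOn (· ≥ ·) A → IsGLB A 0 →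
    ∀ ε : ℝ, 0 < ε → ∃ a ∈ A, ‖a‖ < ε

/-- The order of `G` is given coordinatewise by the Schauder basis `b` with
coordinate functionals `c`. -/
def OrderBasis {G : Type*} [NormedAddCommGroup G] [Lattice G] [HasSolidNorm G] [IsOrderedAddMonoid G] [NormedSpace ℝ G]
    (b : ℕ → G) (c : ℕ → G →L[ℝ] ℝ) : Prop :=
  (∀ x : G, Filter.Tendsto (fun N => ∑ i ∈ Finset.range N, c i x • b i)
    Filter.atTop (nhds x)) ∧
  (∀ i j, c i (b j) = if i = j then (1 : ℝ) else 0) ∧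
  (∀ x : G, 0 ≤ x ↔ ∀ n, 0 ≤ c n x)

/-!
The partial-sum projections `P n = ∑_{i<n} c i ⬝ b i` of the basis do the job. Since the order is
coordinatewise, `P n` keeps the first `n` coordinates of `x` and zeroes the others, so
`0 ≤ P n x ≤ x` for `x ≥ 0` and `|P n x| ≤ |x|`; hence `P n` is a positive contraction of finite
rank, `P n - id` is negative and its modulus is `id - P n`, and `(id - P n) x → 0` is the
convergence of the basis expansion.
-/

section Modulus

variable {E F : Type*} [NormedAddCommGroup E] [Lattice E] [HasSolidNorm E] [IsOrderedAddMonoid E]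
  [NormedSpace ℝ E] [NormedAddCommGroup F] [Lattice F] [HasSolidNorm F] [IsOrderedAddMonoid F]
  [NormedSpace ℝ F]

theorem isModulus_neg_of_isPosOp_neg {T : E →L[ℝ] F} (hT : IsPosOp (-T)) : IsModulus T (-T) := by
  refine ⟨fun x hx => ?_, fun _ _ => le_rfl, fun S _ hS => hS⟩
  have hTx : 0 ≤ -T x := hT x hx
  exact (neg_nonneg.mp hTx).trans hTx

end Modulus

noncomputable def partialSum {G : Type*} [NormedAddCommGroup G] [NormedSpace ℝ G]
    (b : ℕ → G) (c : ℕ → G →L[ℝ] ℝ) (n : ℕ) : G →L[ℝ] G :=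
  ∑ i ∈ Finset.range n, (c i).smulRight (b i)

theorem partialSum_apply {G : Type*} [NormedAddCommGroup G] [NormedSpace ℝ G]
    (b : ℕ → G) (c : ℕ → G →L[ℝ] ℝ) (n : ℕ) (x : G) :
    partialSum b c n x = ∑ i ∈ Finset.range n, c i x • b i := by
  simp [partialSum]

theorem isCompactOperator_partialSum {G : Type*} [NormedAddCommGroup G] [NormedSpace ℝ G]
    (b : ℕ → G) (c : ℕ → G →L[ℝ] ℝ) (n : ℕ) : IsCompactOperator (partialSum b c n) := by
  refine Submodule.sum_mem (compactOperator (RingHom.id ℝ) G G) fun i _ => ?_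
  exact (isCompactOperator_of_locallyCompactSpace_dom (c i)).continuous_comp
    (continuous_id.smul continuous_const)

namespace OrderBasis

variable {G : Type*} [NormedAddCommGroup G] [Lattice G] [HasSolidNorm G] [IsOrderedAddMonoid G]
  [NormedSpace ℝ G] {b : ℕ → G} {c : ℕ → G →L[ℝ] ℝ}

theorem le_iff (hbc : OrderBasis b c) {u v : G} : u ≤ v ↔ ∀ j, c j u ≤ c j v := by
  rw [← sub_nonneg, hbc.2.2]
  simp only [map_sub, sub_nonneg]

theorem coord_partialSum (hbc : OrderBasis b c) (n j : ℕ) (x : G) :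
    c j (partialSum b c n x) = if j < n then c j x else 0 := by
  simp [partialSum_apply, map_sum, hbc.2.1, eq_comm (a := j)]

theorem coord_abs (hbc : OrderBasis b c) (x : G) (j : ℕ) : c j |x| = |c j x| := by
  have hx : ∀ k, |c k x| ≤ c k |x| := fun k =>
    abs_le'.mpr ⟨hbc.le_iff.mp (le_abs_self x) k, by simpa using hbc.le_iff.mp (neg_le_abs x) k⟩
  refine le_antisymm ?_ (hx j)
  -- Lowering the `j`-th coordinate of `|x|` to `|c j x|` keeps an upper bound of `x` and `-x`.
  set u := |x| - (c j |x| - |c j x|) • b j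
  have hu : ∀ k, |c k x| ≤ c k u := fun k => by
    by_cases hk : k = j
    · subst hk; simp [u, hbc.2.1]
    · simpa [u, hbc.2.1, hk] using hx k
  have habs_le : |x| ≤ u := abs_le'.mpr
    ⟨hbc.le_iff.mpr fun k => (le_abs_self _).trans (hu k),
      hbc.le_iff.mpr fun k => by simpa using (neg_le_abs _).trans (hu k)⟩
  simpa [u, hbc.2.1] using hbc.le_iff.mp habs_le j

theorem abs_partialSum_le (hbc : OrderBasis b c) (n : ℕ) (x : G) : |partialSum b c n x| ≤ |x| := by
  refine hbc.le_iff.mpr fun j => ?_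
  rw [hbc.coord_abs, hbc.coord_abs, hbc.coord_partialSum]
  split_ifs <;> simp

theorem norm_partialSum_le_one (hbc : OrderBasis b c) (n : ℕ) : ‖partialSum b c n‖ ≤ 1 :=
  ContinuousLinearMap.opNorm_le_bound _ zero_le_one fun x => by
    simpa using norm_le_norm_of_abs_le_abs (hbc.abs_partialSum_le n x)

theorem isPosOp_partialSum (hbc : OrderBasis b c) (n : ℕ) : IsPosOp (partialSum b c n) :=
  fun x hx => (hbc.2.2 _).mpr fun j => by
    rw [hbc.coord_partialSum]
    split_ifs
    exacts [(hbc.2.2 x).mp hx j, le_rfl]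

theorem isPosOp_id_sub_partialSum (hbc : OrderBasis b c) (n : ℕ) :
    IsPosOp (ContinuousLinearMap.id ℝ G - partialSum b c n) := fun x hx => by
    rw [sub_apply, ContinuousLinearMap.id_apply, sub_nonneg, hbc.le_iff]
    intro j
    rw [hbc.coord_partialSum]
    split_ifs
    exacts [le_rfl, (hbc.2.2 x).mp hx j]

theorem tendsto_partialSum (hbc : OrderBasis b c) (x : G) :
    Tendsto (fun n => partialSum b c n x) atTop (𝓝 x) := by
  simpa only [partialSum_apply] using hbc.1 x

end OrderBasis

theorem exists_seq_positive_compact_to_id_general {G : Type*}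
    [NormedAddCommGroup G] [Lattice G] [HasSolidNorm G] [IsOrderedAddMonoid G] [NormedSpace ℝ G]
    (b : ℕ → G) (c : ℕ → G →L[ℝ] ℝ) (hbc : OrderBasis b c) :
    ∃ S m : ℕ → G →L[ℝ] G,
      (∀ n, IsCompactOperator (S n) ∧ IsPosOp (S n) ∧ ‖S n‖ ≤ 1 ∧
        IsModulus (S n - ContinuousLinearMap.id ℝ G) (m n)) ∧
      ∀ x : G, Filter.Tendsto (fun n => ‖m n x‖) Filter.atTop (nhds 0) := by
  refine ⟨partialSum b c, fun n => -(partialSum b c n - ContinuousLinearMap.id ℝ G),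
    fun n => ⟨isCompactOperator_partialSum b c n, hbc.isPosOp_partialSum n,
      hbc.norm_partialSum_le_one n, isModulus_neg_of_isPosOp_neg ?_⟩, fun x => ?_⟩
  · simpa only [neg_sub] using hbc.isPosOp_id_sub_partialSum n
  · simpa using ((hbc.tendsto_partialSum x).const_sub x).norm

/-- In a Banach lattice with order continuous norm whose order is given by a basis, there is
a sequence of positive compact operators `S_n` of regular norm at most `1` with
`‖|S_n - id|(x)‖ → 0` for every `x`. -/
theorem exists_seq_positive_compact_to_id {G : Type*}
    [NormedAddCommGroup G] [Lattice G] [HasSolidNorm G] [IsOrderedAddMonoid G] [NormedSpace ℝ G] [CompleteSpace G]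
    (hoc : OrderContNorm G)
    (b : ℕ → G) (c : ℕ → G →L[ℝ] ℝ) (hbc : OrderBasis b c) :
    ∃ S m : ℕ → G →L[ℝ] G,
      (∀ n, IsCompactOperator (S n) ∧ IsPosOp (S n) ∧ ‖S n‖ ≤ 1 ∧
        IsModulus (S n - ContinuousLinearMap.id ℝ G) (m n)) ∧
      ∀ x : G, Filter.Tendsto (fun n => ‖m n x‖) Filter.atTop (nhds 0) :=
  exists_seq_positive_compact_to_id_general b c hbc
end

section
/- If F is a Banach lattice with the positive Schur property and E is a Banach lattice whose closed unit ball is sequentially compact in the absolute weak topology |σ|(E,E*), then the pair (E, F) has the positive weak maximizing property. -/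
open Filter Topology NormedSpace

/-- A sequence is weakly null. -/
def WeaklyNullSeq {X : Type*} [NormedAddCommGroup X] [NormedSpace ℝ X]
    (x : ℕ → X) : Prop :=
  ∀ f : X →L[ℝ] ℝ, Filter.Tendsto (fun n => f (x n)) Filter.atTop (nhds 0)

/-- The pair `(E, F)` has the positive weak maximizing property: every positive operator
`T : E → F` admitting a non-weakly-null maximizing sequence of positive norm-one vectors
attains its norm. -/
def WMPpos (E F : Type*) [NormedAddCommGroup E] [Lattice E] [HasSolidNorm E] [IsOrderedAddMonoid E] [NormedSpace ℝ E]
    [NormedAddCommGroup F] [Lattice F] [HasSolidNorm F] [IsOrderedAddMonoid F] [NormedSpace ℝ F] : Prop :=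
  ∀ T : E →L[ℝ] F, IsPosOp T →
    (∃ x : ℕ → E, (∀ n, 0 ≤ x n ∧ ‖x n‖ = 1) ∧
      Filter.Tendsto (fun n => ‖T (x n)‖) Filter.atTop (nhds ‖T‖) ∧ ¬ WeaklyNullSeq x) →
    ∃ x : E, ‖x‖ = 1 ∧ ‖T x‖ = ‖T‖

/-! A maximizing sequence has, by `|σ|`-compactness of the ball, a subsequence `x_k` with
`|x_k - z| → 0` weakly. Since `T` is positive, `T |x_k - z|` is a positive weakly null sequence,
hence norm null by the positive Schur property, and it dominates `|T x_k - T z|`. So `T x_k → T z`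
in norm and `‖T z‖ = ‖T‖` with `‖z‖ ≤ 1`. -/

theorem WeaklyNullSeq.map {X Y : Type*} [NormedAddCommGroup X] [NormedSpace ℝ X]
    [NormedAddCommGroup Y] [NormedSpace ℝ Y] {x : ℕ → X} (hx : WeaklyNullSeq x) (T : X →L[ℝ] Y) :
    WeaklyNullSeq (fun n => T (x n)) :=
  fun f => hx (f.comp T)

theorem ContinuousLinearMap.exists_norm_eq_one_norm_apply_eq_opNorm {X Y : Type*}
    [NormedAddCommGroup X] [NormedSpace ℝ X] [NormedAddCommGroup Y] [NormedSpace ℝ Y]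
    (T : X →L[ℝ] Y) {z : X} (hz : ‖z‖ ≤ 1) (hTz : ‖T z‖ = ‖T‖) (hX : ∃ u : X, ‖u‖ = 1) :
    ∃ x : X, ‖x‖ = 1 ∧ ‖T x‖ = ‖T‖ := by
  obtain hT | hT := (norm_nonneg T).eq_or_lt
  · obtain ⟨u, hu⟩ := hX
    refine ⟨u, hu, le_antisymm ?_ (hT ▸ norm_nonneg _)⟩
    simpa [hu] using T.le_opNorm u
  · refine ⟨z, le_antisymm hz ?_, hTz⟩
    have := T.le_opNorm z
    rw [hTz] at this
    exact (le_mul_iff_one_le_right hT).1 this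

section PositiveOperator

variable {E F : Type*}
  [NormedAddCommGroup E] [Lattice E] [HasSolidNorm E] [IsOrderedAddMonoid E] [NormedSpace ℝ E]
  [NormedAddCommGroup F] [Lattice F] [HasSolidNorm F] [IsOrderedAddMonoid F] [NormedSpace ℝ F]
  {T : E →L[ℝ] F}

theorem IsPosOp.monotone (hT : IsPosOp T) : Monotone T := fun a b hab => by
  simpa using hT (b - a) (sub_nonneg.2 hab)

theorem IsPosOp.abs_apply_le (hT : IsPosOp T) (a : E) : |T a| ≤ T |a| :=
  abs_le'.2 ⟨hT.monotone (le_abs_self a), by simpa using hT.monotone (neg_le_abs a)⟩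

theorem IsPosOp.norm_apply_sub_le (hT : IsPosOp T) (a b : E) : ‖T a - T b‖ ≤ ‖T |a - b|‖ := by
  apply HasSolidNorm.solid
  rw [abs_of_nonneg (hT _ (abs_nonneg _)), ← map_sub]
  exact hT.abs_apply_le _

theorem IsPosOp.tendsto_apply_of_weaklyNullSeq_abs_sub (hT : IsPosOp T)
    (hSchur : ∀ y : ℕ → F, (∀ n, 0 ≤ y n) → WeaklyNullSeq y →
      Tendsto (fun n => ‖y n‖) atTop (𝓝 0))
    {x : ℕ → E} {z : E} (hx : WeaklyNullSeq (fun n => |x n - z|)) :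
    Tendsto (fun n => T (x n)) atTop (𝓝 (T z)) := by
  have hnull := hSchur _ (fun _ => hT _ (abs_nonneg _)) (hx.map T)
  rw [tendsto_iff_norm_sub_tendsto_zero]
  exact squeeze_zero (fun _ => norm_nonneg _) (fun _ => hT.norm_apply_sub_le _ _) hnull

end PositiveOperator

theorem WMPpos_of_positiveSchur_general {E F : Type*}
    [NormedAddCommGroup E] [Lattice E] [HasSolidNorm E] [IsOrderedAddMonoid E] [NormedSpace ℝ E]
    [NormedAddCommGroup F] [Lattice F] [HasSolidNorm F] [IsOrderedAddMonoid F] [NormedSpace ℝ F]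
    (hSchur : ∀ y : ℕ → F, (∀ n, 0 ≤ y n) → WeaklyNullSeq y →
      Filter.Tendsto (fun n => ‖y n‖) Filter.atTop (nhds 0))
    (hball : ∀ x : ℕ → E, (∀ n, ‖x n‖ ≤ 1) → ∃ z : E, ‖z‖ ≤ 1 ∧
      ∃ φ : ℕ → ℕ, StrictMono φ ∧ WeaklyNullSeq (fun k => |x (φ k) - z|)) :
    WMPpos E F := by
  rintro T hT ⟨x, hx, hmax, -⟩
  obtain ⟨z, hz, φ, hφ, hw⟩ := hball x (fun n => (hx n).2.le)
  have hTz : ‖T z‖ = ‖T‖ :=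
    tendsto_nhds_unique (hT.tendsto_apply_of_weaklyNullSeq_abs_sub hSchur hw).norm
      (hmax.comp hφ.tendsto_atTop)
  exact T.exists_norm_eq_one_norm_apply_eq_opNorm hz hTz ⟨x 0, (hx 0).2⟩

/-- If `F` has the positive Schur property and the unit ball of `E` is sequentially compact
in the absolute weak topology (every sequence in the ball has a subsequence `x_{φ(k)}` with
`|x_{φ(k)} - z| → 0` weakly for some `z` in the ball), then `(E, F)` has the positive weak
maximizing property. -/
theorem WMPpos_of_positiveSchur {E F : Type*}
    [NormedAddCommGroup E] [Lattice E] [HasSolidNorm E] [IsOrderedAddMonoid E] [NormedSpace ℝ E] [CompleteSpace E]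
    [NormedAddCommGroup F] [Lattice F] [HasSolidNorm F] [IsOrderedAddMonoid F] [NormedSpace ℝ F] [CompleteSpace F]
    (hSchur : ∀ y : ℕ → F, (∀ n, 0 ≤ y n) → WeaklyNullSeq y →
      Filter.Tendsto (fun n => ‖y n‖) Filter.atTop (nhds 0))
    (hball : ∀ x : ℕ → E, (∀ n, ‖x n‖ ≤ 1) → ∃ z : E, ‖z‖ ≤ 1 ∧
      ∃ φ : ℕ → ℕ, StrictMono φ ∧ WeaklyNullSeq (fun k => |x (φ k) - z|)) :
    WMPpos E F :=
  WMPpos_of_positiveSchur_general hSchur hball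
end
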